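/- arXiv:2503.05932 — 4 statements merged into one kernel-verified Lean document; each statement's English description precedes it below -/
import Mathlib

section
/- For all integers m ≥ 3 and k ≥ 2, taking (p, q) = (m, k*m - 1), one has (p', q') = (m-1, k), the maximum max(p/(p-p'), q/(q-q')) equals m, and m_{p,q} = k*m^2. -/
/-- `m_{p,q} = ⌊ p*q + max(p/(p-p'), q/(q-q')) ⌋`. -/
def mBound (p q p' q' : ℤ) : ℤ :=
  ⌊(p : ℚ) * q + max ((p : ℚ) / ((p : ℚ) - p')) ((q : ℚ) / ((q : ℚ) - q'))⌋

theorem mBound_pair_m_km_sub_one (m k p' q' : ℤ) (hm : 3 ≤ m) (hk : 2 ≤ k)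
    (h1 : 0 < p') (h2 : p' < m) (h3 : 0 < q') (h4 : q' < k * m - 1)
    (heq : m * q' + (k * m - 1) * p' = m * (k * m - 1) + 1) :
    p' = m - 1 ∧ q' = k ∧
    max ((m : ℚ) / ((m : ℚ) - p'))
        (((k : ℚ) * m - 1) / (((k : ℚ) * m - 1) - q')) = (m : ℚ) ∧
    mBound m (k * m - 1) p' q' = k * m ^ 2 := by
  have hdvd : m ∣ p' + 1 := ⟨q' + k * p' - (k * m - 1), by linarith [heq]⟩
  have hp' : p' = m - 1 := by
    have hle : m ≤ p' + 1 := Int.le_of_dvd (by omega) hdvd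
    omega
  subst hp'
  have hq' : q' = k := by
    have h : m * q' = m * k := by nlinarith [heq]
    have hm0 : m ≠ 0 := by omega
    exact mul_left_cancel₀ hm0 h
  subst hq'
  have hmq : (3 : ℚ) ≤ (m : ℚ) := by exact_mod_cast hm
  have hkq : (2 : ℚ) ≤ (q' : ℚ) := by exact_mod_cast hk
  have hden : (0 : ℚ) < (q' : ℚ) * m - 1 - q' := by nlinarith
  have hmax : max ((m : ℚ) / ((m : ℚ) - ((m : ℤ) - 1 : ℤ)))
      (((q' : ℚ) * m - 1) / (((q' : ℚ) * m - 1) - (q' : ℤ))) = (m : ℚ) := by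
    push_cast
    have h1 : (m : ℚ) - (m - 1) = 1 := by ring
    rw [h1, div_one]
    refine max_eq_left ?_
    rw [div_le_iff₀ hden]
    nlinarith
  refine ⟨rfl, rfl, by exact_mod_cast hmax, ?_⟩
  unfold mBound
  push_cast
  rw [show (m : ℚ) - (m - 1) = 1 by ring, div_one]
  have h2 : ((q' : ℚ) * m - 1) / ((q' : ℚ) * m - 1 - q') ≤ (m : ℚ) := by
    rw [div_le_iff₀ hden]; nlinarith
  rw [max_eq_left h2]
  have : (m : ℚ) * (q' * m - 1) + m = ((q' * m ^ 2 : ℤ) : ℚ) := by push_cast; ring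
  rw [this, Int.floor_intCast]
end

section
/- Let 1 < p < q be coprime integers with q - p > 1, let (p', q') be the unique pair with 0 < p' < p, 0 < q' < q and p*q' + q*p' = p*q + 1. Then q - q' - p' > 0, the pair (p', q' - p + p') satisfies p*(q' - p + p') + (q-p)*p' = p*(q-p) + 1 with 0 < q' - p + p' < q - p, and moreover q/(q - q') < (q-p)/((q-p) - (q' - p + p')). -/
theorem blowup_pair_step (p q p' q' : ℤ) (hp : 1 < p) (hpq : p < q)
    (hgap : 1 < q - p) (hco : Int.gcd p q = 1)
    (h1 : 0 < p') (h2 : p' < p) (h3 : 0 < q') (h4 : q' < q)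
    (heq : p * q' + q * p' = p * q + 1) :
    0 < q - q' - p' ∧
    p * (q' - p + p') + (q - p) * p' = p * (q - p) + 1 ∧
    0 < q' - p + p' ∧ q' - p + p' < q - p ∧
    (q : ℚ) / ((q : ℚ) - q') <
      ((q : ℚ) - p) / (((q : ℚ) - p) - ((q' : ℚ) - p + p')) := by
  have hss : q' + p' < q := by
    by_contra h
    push_neg at h
    nlinarith [mul_nonneg (show (0:ℤ) ≤ q - p by linarith)
        (show (0:ℤ) ≤ q - 1 - q' by linarith),
      mul_nonneg (show (0:ℤ) ≤ q by linarith)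
        (show (0:ℤ) ≤ q' + p' - q by linarith)]
  have h0 : p < q' + p' := by
    by_contra h
    push_neg at h
    nlinarith [mul_pos (show (0:ℤ) < q - p by linarith) h3,
      mul_nonneg (show (0:ℤ) ≤ q by linarith)
        (show (0:ℤ) ≤ p - q' - p' by linarith)]
  have key : (p:ℚ) * q' + q * p' = p * q + 1 := by exact_mod_cast heq
  have d1 : (0:ℚ) < (q:ℚ) - q' := by
    exact_mod_cast (show (0:ℤ) < q - q' by linarith)
  have d2 : (0:ℚ) < ((q:ℚ) - p) - ((q':ℚ) - p + p') := by
    exact_mod_cast (show (0:ℤ) < q - p - (q' - p + p') by linarith)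
  refine ⟨by linarith, by linear_combination heq, by linarith, by linarith, ?_⟩
  rw [div_lt_div_iff₀ d1 d2]
  nlinarith [key]
end

section
/- Let 1 < p < q be coprime integers with p < q - p (so 1 < p < q - p and gcd(p, q-p) = 1). Then m_{p,q} - p^2 ≤ m_{p, q-p}. -/
theorem mBound_blowup (p q p' q' p'' q'' : ℤ) (hp : 1 < p) (h : p < q - p)
    (hco : Int.gcd p q = 1)
    (h1 : 0 < p') (h2 : p' < p) (h3 : 0 < q') (h4 : q' < q)
    (heq : p * q' + q * p' = p * q + 1)
    (h1' : 0 < p'') (h2' : p'' < p) (h3' : 0 < q'') (h4' : q'' < q - p)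
    (heq' : p * q'' + (q - p) * p'' = p * (q - p) + 1) :
    mBound p q p' q' - p ^ 2 ≤ mBound p (q - p) p'' q'' := by
  -- Step 1: p'' = p'
  have hcop : IsCoprime p q := Int.isCoprime_iff_gcd_eq_one.mpr hco
  have hdvd : p ∣ q * (p' - p'') :=
    ⟨p - q' + q'' - p'', by linear_combination heq - heq'⟩
  have hpp : p'' = p' := by
    obtain ⟨k, hk⟩ := hcop.dvd_of_dvd_mul_left hdvd
    have hk0 : k = 0 := by nlinarith [hk]
    rw [hk0, mul_zero] at hk
    omega
  rw [hpp] at heq' h1' h2' ⊢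
  -- Step 2: q'' = q' + p' - p
  have hq'' : q'' = q' + p' - p := by
    have hcc : p * q'' = p * (q' + p' - p) := by linear_combination heq' - heq
    have hp0 : p ≠ 0 := by omega
    exact mul_left_cancel₀ hp0 hcc
  -- Rational casts
  have hqQ : (p : ℚ) * q' + (q : ℚ) * p' = (p : ℚ) * q + 1 := by exact_mod_cast heq
  have hqq : (q'' : ℚ) = (q' : ℚ) + p' - p := by exact_mod_cast hq''
  have hd1 : (0 : ℚ) < (q : ℚ) - q' := by
    have : (q' : ℚ) < q := by exact_mod_cast h4
    linarith
  have hd2 : (0 : ℚ) < ((q : ℚ) - p) - q'' := by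
    have : (q'' : ℚ) < (q : ℚ) - p := by exact_mod_cast h4'
    linarith
  have key : (q : ℚ) / ((q : ℚ) - q') ≤ ((q : ℚ) - p) / (((q : ℚ) - p) - q'') := by
    rw [div_le_div_iff₀ hd1 hd2]
    have hc : (q : ℚ) * (((q : ℚ) - p) - q'') = ((q : ℚ) - p) * ((q : ℚ) - q') - 1 := by
      rw [hqq]; linear_combination (-1 : ℚ) * hqQ
    linarith
  have hmax : max ((p : ℚ) / ((p : ℚ) - p')) ((q : ℚ) / ((q : ℚ) - q')) ≤
      max ((p : ℚ) / ((p : ℚ) - p')) (((q : ℚ) - p) / (((q : ℚ) - p) - q'')) :=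
    max_le_max le_rfl key
  unfold mBound
  rw [show (p : ℤ) ^ 2 = ((p ^ 2 : ℤ)) from rfl, ← Int.floor_sub_intCast]
  apply Int.floor_le_floor
  push_cast
  nlinarith [hmax]
end

section
/- The group with presentation ⟨q₁, q₂, q₃, h | h is central, q₁³ = h⁴, q₂²h = 1, q₃³h = 1, q₁q₂q₃ = 1, q₁ = h⟩ is the trivial group. -/
/-- Generators: `0 ↦ q₁`, `1 ↦ q₂`, `2 ↦ q₃`, `3 ↦ h`. -/
def curveGroupRels : Set (FreeGroup (Fin 4)) :=
  { FreeGroup.of 3 * FreeGroup.of 0 * (FreeGroup.of 3)⁻¹ * (FreeGroup.of 0)⁻¹,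
    FreeGroup.of 3 * FreeGroup.of 1 * (FreeGroup.of 3)⁻¹ * (FreeGroup.of 1)⁻¹,
    FreeGroup.of 3 * FreeGroup.of 2 * (FreeGroup.of 3)⁻¹ * (FreeGroup.of 2)⁻¹,
    FreeGroup.of 0 ^ 3 * ((FreeGroup.of 3)⁻¹) ^ 4,
    FreeGroup.of 1 ^ 2 * FreeGroup.of 3,
    FreeGroup.of 2 ^ 3 * FreeGroup.of 3,
    FreeGroup.of 0 * FreeGroup.of 1 * FreeGroup.of 2,
    FreeGroup.of 0 * (FreeGroup.of 3)⁻¹ }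

lemma curve_rel_one {r : FreeGroup (Fin 4)} (hr : r ∈ curveGroupRels) :
    (QuotientGroup.mk r : PresentedGroup curveGroupRels) = 1 := by
  rw [QuotientGroup.eq_one_iff]
  exact Subgroup.subset_normalClosure hr

lemma curve_gen_one (i : Fin 4) :
    (PresentedGroup.of i : PresentedGroup curveGroupRels) = 1 := by
  have r4 := curve_rel_one (r := FreeGroup.of 0 ^ 3 * ((FreeGroup.of 3)⁻¹) ^ 4)
    (by simp [curveGroupRels])
  have r5 := curve_rel_one (r := FreeGroup.of 1 ^ 2 * FreeGroup.of 3)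
    (by simp [curveGroupRels])
  have r6 := curve_rel_one (r := FreeGroup.of 2 ^ 3 * FreeGroup.of 3)
    (by simp [curveGroupRels])
  have r7 := curve_rel_one (r := FreeGroup.of 0 * FreeGroup.of 1 * FreeGroup.of 2)
    (by simp [curveGroupRels])
  have r8 := curve_rel_one (r := FreeGroup.of 0 * (FreeGroup.of 3)⁻¹)
    (by simp [curveGroupRels])
  set q1 : PresentedGroup curveGroupRels := PresentedGroup.of 0 with hq1
  set q2 : PresentedGroup curveGroupRels := PresentedGroup.of 1 with hq2
  set q3 : PresentedGroup curveGroupRels := PresentedGroup.of 2 with hq3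
  set h : PresentedGroup curveGroupRels := PresentedGroup.of 3 with hh
  have e4 : q1 ^ 3 * (h⁻¹) ^ 4 = 1 := by
    simp only [QuotientGroup.mk_mul, QuotientGroup.mk_pow,
      QuotientGroup.mk_inv] at r4; exact r4
  have e5 : q2 ^ 2 * h = 1 := by
    simp only [QuotientGroup.mk_mul, QuotientGroup.mk_pow, QuotientGroup.mk_inv] at r5; exact r5
  have e6 : q3 ^ 3 * h = 1 := by
    simp only [QuotientGroup.mk_mul, QuotientGroup.mk_pow, QuotientGroup.mk_inv] at r6; exact r6
  have e7 : q1 * q2 * q3 = 1 := by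
    simp only [QuotientGroup.mk_mul, QuotientGroup.mk_pow, QuotientGroup.mk_inv] at r7; exact r7
  have e8 : q1 * h⁻¹ = 1 := by
    simp only [QuotientGroup.mk_mul, QuotientGroup.mk_pow, QuotientGroup.mk_inv] at r8; exact r8
  have hq1h : q1 = h := by
    have := mul_eq_one_iff_eq_inv.mp e8
    simpa using this
  have hh1 : h = 1 := by
    rw [hq1h] at e4
    have : h ^ 3 * (h ^ 4)⁻¹ = 1 := by rwa [inv_pow] at e4
    group at this
    simpa using this
  have hq1 : q1 = 1 := by rw [hq1h, hh1]
  have e5' : q2 ^ 2 = 1 := by simpa [hh1] using e5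
  have e6' : q3 ^ 3 = 1 := by simpa [hh1] using e6
  have e7' : q2 * q3 = 1 := by simpa [hq1] using e7
  have hq3 : q3 = q2⁻¹ := by
    have := mul_eq_one_iff_eq_inv.mp e7'
    rw [eq_comm, inv_eq_iff_eq_inv] at this
    exact this.symm ▸ rfl
  have hq2 : q2 = 1 := by
    have : (q2⁻¹) ^ 3 = 1 := hq3 ▸ e6'
    have h3 : q2 ^ 3 = 1 := by
      rw [inv_pow] at this
      simpa using inv_eq_one.mp this
    calc q2 = q2 ^ 3 * (q2 ^ 2)⁻¹ := by group
    _ = 1 := by rw [h3, e5']; simp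
  have hq3' : q3 = 1 := by rw [hq3, hq2]; simp
  fin_cases i <;> assumption
lemma curve_mk_one (w : FreeGroup (Fin 4)) :
    (QuotientGroup.mk w : PresentedGroup curveGroupRels) = 1 := by
  induction w using FreeGroup.induction_on with
  | C1 => rfl
  | of i => exact curve_gen_one i
  | inv_of i hi =>
      rw [QuotientGroup.mk_inv, inv_eq_one]
      exact curve_gen_one i
  | mul x y hx hy =>
      rw [QuotientGroup.mk_mul, hx, hy, one_mul]

theorem presented_group_trivial :
    ∀ x y : PresentedGroup curveGroupRels, x = y := by
  intro x y
  obtain ⟨wx, rfl⟩ := QuotientGroup.mk_surjective x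
  obtain ⟨wy, rfl⟩ := QuotientGroup.mk_surjective y
  rw [curve_mk_one wx, curve_mk_one wy]
end
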